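/- arXiv:1001.4031 — 2 statements merged into one kernel-verified Lean document; each statement's English description precedes it below -/
import Mathlib

section
/- For each fixed t ∈ (0,1], σ_loc²(1+t, x) → 3 as x → +∞; moreover the convergence is uniform on compact time intervals away from t = 0: for every ε ∈ (0,1] and every η > 0 there exists M > 0 such that σ_loc²(1+t, x) ≥ 3 − η for all t ∈ [ε, 1] and all x > M. -/
/-!
For `t ∈ (0,1]` the local variance `σ_loc²(1+t, x)` is the mean of `σ₊² = 3` and `σ₋² = 1`
weighted by `p₊` and `p₋`, where `Σ₊ = 3t + 2 > Σ₋ = t + 2`. Completing the square,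
`p₋ / p₊ = √(Σ₊/Σ₋) · exp (t/4 - t x² / (Σ₊ Σ₋))`, which is at most `2 exp (1/4 - ε x² / 15)`
for `t ∈ [ε, 1]`. So `σ_loc²(1+t, x)` is squeezed between `3 - 4 exp (1/4 - ε x² / 15)` and `3`.
-/

open Real Set

/-- `Σ₊(t)`: integrated variance of the `+` branch of the mixing model. -/
noncomputable def Sigp (t : ℝ) : ℝ :=
  if t ≤ 1 then 2 * t else if t ≤ 2 then 3 * t - 1 else t + 3

/-- `Σ₋(t)`: integrated variance of the `−` branch of the mixing model. -/
noncomputable def Sigm (t : ℝ) : ℝ :=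
  if t ≤ 1 then 2 * t else if t ≤ 2 then t + 1 else 3 * t - 3

/-- `σ₊²(t)`: instantaneous variance of the `+` branch. -/
noncomputable def sigp2 (t : ℝ) : ℝ :=
  if t ≤ 1 then 2 else if t ≤ 2 then 3 else 1

/-- `σ₋²(t)`: instantaneous variance of the `−` branch. -/
noncomputable def sigm2 (t : ℝ) : ℝ :=
  if t ≤ 1 then 2 else if t ≤ 2 then 1 else 3

/-- `p₊(t,x) = Σ₊(t)^{-1/2} exp(−(x+Σ₊(t)/2)²/(2Σ₊(t)))`. -/
noncomputable def pplus (t x : ℝ) : ℝ :=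
  Real.exp (-(x + Sigp t / 2) ^ 2 / (2 * Sigp t)) / Real.sqrt (Sigp t)

/-- `p₋(t,x) = Σ₋(t)^{-1/2} exp(−(x+Σ₋(t)/2)²/(2Σ₋(t)))`. -/
noncomputable def pminus (t x : ℝ) : ℝ :=
  Real.exp (-(x + Sigm t / 2) ^ 2 / (2 * Sigm t)) / Real.sqrt (Sigm t)

/-- The Dupire local variance `σ_loc²(t,x)` of the Black–Scholes mixing model. -/
noncomputable def sigloc2 (t x : ℝ) : ℝ :=
  (sigp2 t * pplus t x + sigm2 t * pminus t x) / (pplus t x + pminus t x)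

open Filter Topology

/-- Up to the factor `(2π)^{-1/2}`, the density at `x` of the log-price `N(-s/2, s)` of a
Black–Scholes model with integrated variance `s`. -/
noncomputable def logPriceDensity (s x : ℝ) : ℝ :=
  exp (-(x + s / 2) ^ 2 / (2 * s)) / sqrt s

lemma logPriceDensity_pos {s : ℝ} (hs : 0 < s) (x : ℝ) : 0 < logPriceDensity s x :=
  div_pos (exp_pos _) (sqrt_pos.2 hs)

lemma logPriceDensity_eq_mul {a b : ℝ} (ha : 0 < a) (hb : 0 < b) (x : ℝ) :
    logPriceDensity b x =
      sqrt (a / b) * exp ((a - b) / 8 - (a - b) * x ^ 2 / (2 * a * b)) * logPriceDensity a x := by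
  have hexp : -(x + b / 2) ^ 2 / (2 * b) =
      (a - b) / 8 - (a - b) * x ^ 2 / (2 * a * b) + -(x + a / 2) ^ 2 / (2 * a) := by
    field_simp
    ring
  rw [logPriceDensity, logPriceDensity, hexp, exp_add, sqrt_div ha.le]
  field_simp

lemma weighted_mean_le {α β p q : ℝ} (hβα : β ≤ α) (hp : 0 < p) (hq : 0 ≤ q) :
    (α * p + β * q) / (p + q) ≤ α := by
  rw [div_le_iff₀ (by positivity)]
  nlinarith

lemma sub_mul_div_le_weighted_mean {α β p q : ℝ} (hβα : β ≤ α) (hp : 0 < p) (hq : 0 ≤ q) :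
    α - (α - β) * (q / p) ≤ (α * p + β * q) / (p + q) := by
  have hpq : 0 < p + q := by positivity
  have hrem : (α * p + β * q) / (p + q) = α - (α - β) * (q / (p + q)) := by
    field_simp
    ring
  rw [hrem]
  gcongr
  linarith

lemma tendsto_exp_sub_mul_sq_atTop (a : ℝ) {c : ℝ} (hc : 0 < c) :
    Tendsto (fun x : ℝ => exp (a - c * x ^ 2)) atTop (𝓝 0) := by
  have hsq : Tendsto (fun x : ℝ => c * x ^ 2) atTop atTop :=
    (tendsto_pow_atTop two_ne_zero).const_mul_atTop hc
  exact tendsto_exp_atBot.comp (tendsto_atBot_add_const_left _ a (tendsto_neg_atTop_atBot.comp hsq))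

section SecondPeriod

variable {t : ℝ}

lemma Sigp_one_add (ht : t ∈ Ioc 0 1) : Sigp (1 + t) = 3 * t + 2 := by
  rw [Sigp, if_neg (by linarith [ht.1]), if_pos (by linarith [ht.2])]
  ring

lemma Sigm_one_add (ht : t ∈ Ioc 0 1) : Sigm (1 + t) = t + 2 := by
  rw [Sigm, if_neg (by linarith [ht.1]), if_pos (by linarith [ht.2])]
  ring

lemma sigp2_one_add (ht : t ∈ Ioc 0 1) : sigp2 (1 + t) = 3 := by
  rw [sigp2, if_neg (by linarith [ht.1]), if_pos (by linarith [ht.2])]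

lemma sigm2_one_add (ht : t ∈ Ioc 0 1) : sigm2 (1 + t) = 1 := by
  rw [sigm2, if_neg (by linarith [ht.1]), if_pos (by linarith [ht.2])]

lemma sigloc2_one_add (ht : t ∈ Ioc 0 1) (x : ℝ) :
    sigloc2 (1 + t) x =
      (3 * logPriceDensity (3 * t + 2) x + 1 * logPriceDensity (t + 2) x) /
        (logPriceDensity (3 * t + 2) x + logPriceDensity (t + 2) x) := by
  rw [sigloc2, pplus, pminus, Sigp_one_add ht, Sigm_one_add ht, sigp2_one_add ht,
    sigm2_one_add ht]
  rfl

lemma sigloc2_one_add_le_three (ht : t ∈ Ioc 0 1) (x : ℝ) : sigloc2 (1 + t) x ≤ 3 := by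
  rw [sigloc2_one_add ht]
  exact weighted_mean_le (by norm_num) (logPriceDensity_pos (by linarith [ht.1]) x)
    (logPriceDensity_pos (by linarith [ht.1]) x).le

lemma logPriceDensity_le_of_mem_Icc {ε : ℝ} (hε : 0 < ε) (ht : t ∈ Icc ε 1) (x : ℝ) :
    logPriceDensity (t + 2) x ≤
      2 * exp (1 / 4 - ε / 15 * x ^ 2) * logPriceDensity (3 * t + 2) x := by
  obtain ⟨hεt, ht1⟩ := ht
  have ht0 : 0 < t := hε.trans_le hεt
  have hsqrt : sqrt ((3 * t + 2) / (t + 2)) ≤ 2 := by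
    rw [sqrt_le_left (by norm_num), div_le_iff₀ (by linarith)]
    linarith
  have hexponent : (3 * t + 2 - (t + 2)) / 8 - (3 * t + 2 - (t + 2)) * x ^ 2 /
      (2 * (3 * t + 2) * (t + 2)) ≤ 1 / 4 - ε / 15 * x ^ 2 := by
    have hprod : ε / 15 ≤ t / ((3 * t + 2) * (t + 2)) := by
      have hP : (3 * t + 2) * (t + 2) ≤ 15 := by nlinarith
      rw [div_le_div_iff₀ (by norm_num) (by positivity)]
      nlinarith [mul_le_mul hεt hP (by positivity) ht0.le]
    have hrw : (3 * t + 2 - (t + 2)) * x ^ 2 / (2 * (3 * t + 2) * (t + 2)) =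
        t / ((3 * t + 2) * (t + 2)) * x ^ 2 := by
      field_simp
      ring
    rw [hrw]
    nlinarith [sq_nonneg x]
  rw [logPriceDensity_eq_mul (a := 3 * t + 2) (by linarith) (by linarith)]
  gcongr
  exact (logPriceDensity_pos (by linarith) x).le

lemma three_sub_le_sigloc2_one_add {ε : ℝ} (hε : 0 < ε) (ht : t ∈ Icc ε 1) (x : ℝ) :
    3 - 4 * exp (1 / 4 - ε / 15 * x ^ 2) ≤ sigloc2 (1 + t) x := by
  have ht0 : 0 < t := hε.trans_le ht.1
  have hplus := logPriceDensity_pos (s := 3 * t + 2) (by linarith) x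
  have hminus := logPriceDensity_pos (s := t + 2) (by linarith) x
  have hratio : logPriceDensity (t + 2) x / logPriceDensity (3 * t + 2) x ≤
      2 * exp (1 / 4 - ε / 15 * x ^ 2) := by
    rw [div_le_iff₀ hplus]
    exact logPriceDensity_le_of_mem_Icc hε ht x
  rw [sigloc2_one_add ⟨ht0, ht.2⟩]
  refine le_trans ?_ (sub_mul_div_le_weighted_mean (by norm_num) hplus hminus.le)
  linarith

end SecondPeriod

/-- For each fixed `t ∈ (0,1]`, `σ_loc²(1+t, x) → 3` as `x → +∞`, and the convergence
is uniform for `t` in compact intervals `[ε,1]` away from `0`. -/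
theorem sigloc2_tendsto_three_at_top :
    (∀ t ∈ Set.Ioc (0 : ℝ) 1,
      Filter.Tendsto (fun x : ℝ => sigloc2 (1 + t) x) Filter.atTop (nhds 3)) ∧
    (∀ ε ∈ Set.Ioc (0 : ℝ) 1, ∀ η > (0 : ℝ), ∃ M > (0 : ℝ),
      ∀ t ∈ Set.Icc ε 1, ∀ x > M, 3 - η ≤ sigloc2 (1 + t) x) := by
  have hlower : ∀ ε > (0 : ℝ),
      Tendsto (fun x : ℝ => 3 - 4 * exp (1 / 4 - ε / 15 * x ^ 2)) atTop (𝓝 3) := fun ε hε => by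
    simpa using tendsto_const_nhds.sub
      ((tendsto_exp_sub_mul_sq_atTop (1 / 4) (div_pos hε (by norm_num))).const_mul 4)
  refine ⟨fun t ht => ?_, fun ε hε η hη => ?_⟩
  · exact tendsto_of_tendsto_of_tendsto_of_le_of_le (hlower t ht.1) tendsto_const_nhds
      (three_sub_le_sigloc2_one_add ht.1 ⟨le_rfl, ht.2⟩) (sigloc2_one_add_le_three ht)
  · obtain ⟨N, hN⟩ := eventually_atTop.1
      ((hlower ε hε.1).eventually (eventually_ge_nhds (by linarith : 3 - η < 3)))
    exact ⟨max N 1, by positivity, fun t ht x hx =>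
      (hN x ((le_max_left N 1).trans hx.le)).trans (three_sub_le_sigloc2_one_add hε.1 ht x)⟩
end

section
/- There exists a constant L > 0 such that for every t ∈ (0,3] the map x ↦ σ_loc²(t, x) is L-Lipschitz on ℝ, i.e. |σ_loc²(t,x) − σ_loc²(t,y)| ≤ L|x − y| for all x, y ∈ ℝ, with L independent of t. (Consequently, since σ_loc² is also bounded away from 0, x ↦ σ_loc(t,x) = √(σ_loc²(t,x)) is Lipschitz uniformly in t.) -/
open Real Set

/-! Writing `r = p₋ / p₊`, the local variance is `σ₊² + (σ₋² - σ₊²) · r / (1 + r)`, so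
`|σ_loc²(t,x) - σ_loc²(t,y)| ≤ |σ₋² - σ₊²| · |r(x) - r(y)|`. On `(0,1]` the two branches coincide
and this vanishes. On `(1,3]` we have `2 ≤ Σ₋ ≤ Σ₊ ≤ 6`, and completing the square gives
`r(x) = √(Σ₊/Σ₋) e^{(Σ₊-Σ₋)/8} e^{-c x²}` with `c = (Σ₊-Σ₋)/(2Σ₊Σ₋) ∈ [0,1]`; the prefactor is
bounded independently of `t` and `x ↦ e^{-c x²}` is `1`-Lipschitz since `2c|x| ≤ 1 + c x² ≤ e^{c x²}`.
-/

lemma abs_mul_mul_exp_neg_mul_sq_le {c : ℝ} (hc0 : 0 ≤ c) (hc1 : c ≤ 1) (x : ℝ) :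
    |2 * c * x * exp (-c * x ^ 2)| ≤ 1 := by
  have hlin : 2 * c * |x| ≤ exp (c * x ^ 2) := calc
    2 * c * |x| ≤ c * x ^ 2 + 1 := by nlinarith [sq_nonneg (|x| - 1), sq_abs x]
    _ ≤ exp (c * x ^ 2) := add_one_le_exp _
  rw [abs_mul, abs_mul, abs_mul, abs_of_nonneg hc0, abs_two, abs_of_pos (exp_pos _), neg_mul,
    exp_neg, mul_inv_le_iff₀ (exp_pos _), one_mul]
  exact hlin

lemma abs_exp_neg_mul_sq_sub_le {c : ℝ} (hc0 : 0 ≤ c) (hc1 : c ≤ 1) (x y : ℝ) :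
    |exp (-c * x ^ 2) - exp (-c * y ^ 2)| ≤ |x - y| := by
  have hderiv (z : ℝ) : HasDerivWithinAt (fun z => exp (-c * z ^ 2))
      (-(2 * c * z * exp (-c * z ^ 2))) univ z := by
    refine (((hasDerivAt_pow 2 z).const_mul (-c)).exp.congr_deriv ?_).hasDerivWithinAt
    push_cast
    ring
  have := convex_univ.norm_image_sub_le_of_norm_hasDerivWithin_le (fun z _ => hderiv z)
    (fun z _ => by rw [norm_neg]; exact abs_mul_mul_exp_neg_mul_sq_le hc0 hc1 z)
    (mem_univ y) (mem_univ x)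
  rwa [one_mul] at this

lemma abs_mix_sub_mix_le (a b : ℝ) {p q p' q' : ℝ} (hp : 0 < p) (hq : 0 ≤ q) (hp' : 0 < p')
    (hq' : 0 ≤ q') :
    |(a * p + b * q) / (p + q) - (a * p' + b * q') / (p' + q')| ≤ |b - a| * |q / p - q' / p'| := by
  have hr : 0 ≤ q / p := div_nonneg hq hp.le
  have hr' : 0 ≤ q' / p' := div_nonneg hq' hp'.le
  have hdiff : (a * p + b * q) / (p + q) - (a * p' + b * q') / (p' + q') =
      (b - a) * (q / p - q' / p') / ((1 + q / p) * (1 + q' / p')) := by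
    field_simp
    ring
  have hden : 1 ≤ (1 + q / p) * (1 + q' / p') := by nlinarith
  rw [hdiff, abs_div, abs_of_pos (zero_lt_one.trans_le hden), abs_mul]
  exact div_le_self (by positivity) hden

-- `pplus t = gaussKernel (Sigp t)` and `pminus t = gaussKernel (Sigm t)` by definition.
noncomputable def gaussKernel (S x : ℝ) : ℝ :=
  exp (-(x + S / 2) ^ 2 / (2 * S)) / √S

lemma gaussKernel_pos {S : ℝ} (hS : 0 < S) (x : ℝ) : 0 < gaussKernel S x :=
  div_pos (exp_pos _) (sqrt_pos.mpr hS)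

lemma gaussKernel_div_gaussKernel {S T : ℝ} (hS : 0 < S) (hT : 0 < T) (x : ℝ) :
    gaussKernel T x / gaussKernel S x =
      √(S / T) * exp ((S - T) / 8) * exp (-((S - T) / (2 * S * T)) * x ^ 2) := by
  have hexponent : -(x + T / 2) ^ 2 / (2 * T) =
      -(x + S / 2) ^ 2 / (2 * S) + ((S - T) / 8 + -((S - T) / (2 * S * T)) * x ^ 2) := by
    field_simp
    ring
  have hS' : √S ≠ 0 := (sqrt_pos.mpr hS).ne'
  have hT' : √T ≠ 0 := (sqrt_pos.mpr hT).ne'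
  rw [gaussKernel, gaussKernel, hexponent, exp_add, exp_add, sqrt_div hS.le]
  field_simp

lemma abs_gaussKernel_div_sub_le {S T : ℝ} (hT : 0 < T) (hTS : T ≤ S) (hST : S - T ≤ 2 * S * T)
    (x y : ℝ) :
    |gaussKernel T x / gaussKernel S x - gaussKernel T y / gaussKernel S y| ≤
      √(S / T) * exp ((S - T) / 8) * |x - y| := by
  have hS : 0 < S := hT.trans_le hTS
  have hc0 : 0 ≤ (S - T) / (2 * S * T) := div_nonneg (by linarith) (by positivity)
  have hc1 : (S - T) / (2 * S * T) ≤ 1 := (div_le_one (by positivity)).mpr hST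
  rw [gaussKernel_div_gaussKernel hS hT, gaussKernel_div_gaussKernel hS hT, ← mul_sub, abs_mul,
    abs_of_nonneg (by positivity)]
  exact mul_le_mul_of_nonneg_left (abs_exp_neg_mul_sq_sub_le hc0 hc1 x y) (by positivity)

lemma abs_gaussKernel_div_sub_le_of_two_le {S T : ℝ} (hT : 2 ≤ T) (hTS : T ≤ S) (hS : S ≤ 6)
    (x y : ℝ) :
    |gaussKernel T x / gaussKernel S x - gaussKernel T y / gaussKernel S y| ≤
      3 * exp 1 * |x - y| := by
  have hratio : S / T ≤ 3 := (div_le_iff₀ (by linarith)).mpr (by linarith)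
  have hsqrt : √(S / T) ≤ S / T :=
    sqrt_le_self_iff.mpr (Or.inr ((one_le_div (by linarith)).mpr hTS))
  calc _ ≤ √(S / T) * exp ((S - T) / 8) * |x - y| :=
        abs_gaussKernel_div_sub_le (by linarith) hTS (by nlinarith) x y
    _ ≤ 3 * exp 1 * |x - y| := by gcongr <;> linarith

lemma Sigp_pos {t : ℝ} (ht : 0 < t) : 0 < Sigp t := by
  unfold Sigp; split_ifs <;> linarith

lemma Sigm_pos {t : ℝ} (ht : 0 < t) : 0 < Sigm t := by
  unfold Sigm; split_ifs <;> linarith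

lemma two_le_Sigm {t : ℝ} (ht : 1 < t) : 2 ≤ Sigm t := by
  unfold Sigm; split_ifs <;> linarith

lemma Sigm_le_Sigp {t : ℝ} (ht : t ≤ 3) : Sigm t ≤ Sigp t := by
  unfold Sigm Sigp; split_ifs <;> linarith

lemma Sigp_le_six {t : ℝ} (ht : t ≤ 3) : Sigp t ≤ 6 := by
  unfold Sigp; split_ifs <;> linarith

lemma sigm2_eq_sigp2 {t : ℝ} (ht : t ≤ 1) : sigm2 t = sigp2 t := by
  simp [sigm2, sigp2, ht]

lemma abs_sigm2_sub_sigp2_le (t : ℝ) : |sigm2 t - sigp2 t| ≤ 2 := by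
  unfold sigm2 sigp2; split_ifs <;> norm_num

/-- There is a constant `L > 0`, independent of `t`, such that for every `t ∈ (0,3]`
the map `x ↦ σ_loc²(t,x)` is `L`-Lipschitz on `ℝ`. -/
theorem sigloc2_lipschitz_uniformly_in_time :
    ∃ L > (0 : ℝ), ∀ t ∈ Set.Ioc (0 : ℝ) 3, ∀ x y : ℝ,
      |sigloc2 t x - sigloc2 t y| ≤ L * |x - y| := by
  refine ⟨6 * exp 1, by positivity, ?_⟩
  rintro t ⟨ht0, ht3⟩ x y
  have hmix : |sigloc2 t x - sigloc2 t y| ≤ |sigm2 t - sigp2 t| *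
      |gaussKernel (Sigm t) x / gaussKernel (Sigp t) x -
        gaussKernel (Sigm t) y / gaussKernel (Sigp t) y| :=
    abs_mix_sub_mix_le _ _ (gaussKernel_pos (Sigp_pos ht0) x) (gaussKernel_pos (Sigm_pos ht0) x).le
      (gaussKernel_pos (Sigp_pos ht0) y) (gaussKernel_pos (Sigm_pos ht0) y).le
  rcases le_or_gt t 1 with ht1 | ht1
  · rw [sigm2_eq_sigp2 ht1, sub_self, abs_zero, zero_mul] at hmix
    exact hmix.trans (by positivity)
  · calc _ ≤ _ := hmix
      _ ≤ 2 * (3 * exp 1 * |x - y|) := by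
        gcongr
        · exact abs_sigm2_sub_sigp2_le t
        · exact abs_gaussKernel_div_sub_le_of_two_le (two_le_Sigm ht1) (Sigm_le_Sigp ht3)
            (Sigp_le_six ht3) x y
      _ = 6 * exp 1 * |x - y| := by ring
end
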